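/- Let R = k[x_0,...,x_n] be a polynomial ring over a field k, and let I be a monomial ideal with lcm-lattice L. For each r = 1,...,height(L), fix an integer d_r ≥ max{deg σ : σ ∈ L, height σ = r}, and choose for each σ ∈ L a monomial σ̄ with deg σ̄ = d_{height σ} and with the same radical (same support of variables) as σ. Define g_r = Σ_{σ ∈ L, height σ = r} σ̄. Then the radical of the ideal (g_1,...,g_{height L}) equals the radical of I. -/

import Mathlib

/-!
Every height-`r` term of `g_r` has the support of some lattice element `σ ≠ 1`, which is
divisible by a generator, so `√(g_1, …, g_h) ⊆ √I`. Conversely, let `σ` have height `r` and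
suppose `σ̄' ∈ √(g)` for every `σ' > σ` in `L`. Multiplying `g_r` by `σ̄` gives `σ̄²` plus the
products `σ̄ τ̄` over the other elements `τ` of height `r`; such `τ` are incomparable with `σ`,
so `σ < σ ⊔ τ`, and `σ̄ τ̄` has the support of the strictly larger lattice element `σ ⊔ τ`,
hence lies in `√(g)`. Thus `σ̄² ∈ √(g)`, and descending through the finite lattice every `σ̄`,
in particular the bar of every generator, lies in `√(g)`.
-/

open MvPolynomial

noncomputable section

abbrev Mon (n : ℕ) : Type := Fin (n+1) →₀ ℕ

/-- total degree of a monomial exponent vector -/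
def mdeg {n : ℕ} (m : Mon n) : ℕ := m.sum fun _ e => e

/-- height of σ in a lattice L of monomials: the length of the longest chain in `[1, σ] ∩ L`
ending at σ (the bottom `1`, i.e. the zero exponent vector, belongs to `L`). -/
def heightIn {n : ℕ} (L : Set (Mon n)) (σ : Mon n) : ℕ :=
  sSup {r : ℕ | ∃ c : Fin (r+1) → Mon n, StrictMono c ∧ (∀ i, c i ∈ L ∧ c i ≤ σ) ∧
    c (Fin.last r) = σ}

/-- height of L: length of the longest chain in L -/
def latHeight {n : ℕ} (L : Set (Mon n)) : ℕ :=
  sSup {r : ℕ | ∃ c : Fin (r+1) → Mon n, StrictMono c ∧ ∀ i, c i ∈ L}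

/-- the lcm lattice of a set of monomials: all lcms (pointwise sups) of subsets,
including the bottom element `1` (the empty lcm). -/
def lcmLattice {n : ℕ} (G : Finset (Mon n)) : Finset (Mon n) :=
  G.powerset.image fun F => F.sup id

/-- the monomial ideal generated by a finite set of exponent vectors -/
def monIdeal {n : ℕ} (k : Type) [Field k] (G : Finset (Mon n)) :
    Ideal (MvPolynomial (Fin (n+1)) k) :=
  Ideal.span ((fun m => (monomial m (1:k))) '' ↑G)

section Radical

variable {ι : Type*}

theorem exists_le_nsmul_of_support_subset {a b : ι →₀ ℕ} (h : b.support ⊆ a.support) :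
    ∃ N : ℕ, b ≤ N • a := by
  refine ⟨b.support.sup b, fun i => ?_⟩
  by_cases hi : i ∈ b.support
  · have hai : 1 ≤ a i := Nat.one_le_iff_ne_zero.2 (Finsupp.mem_support_iff.1 (h hi))
    calc b i ≤ b.support.sup b := Finset.le_sup hi
      _ ≤ b.support.sup b * a i := Nat.le_mul_of_pos_right _ hai
  · simp [Finsupp.notMem_support_iff.1 hi]

theorem monomial_one_mem_radical_of_support_subset {R : Type*} [CommSemiring R]
    {K : Ideal (MvPolynomial ι R)} {a b : ι →₀ ℕ} (hb : monomial b (1 : R) ∈ K)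
    (h : b.support ⊆ a.support) : monomial a (1 : R) ∈ K.radical := by
  obtain ⟨N, hN⟩ := exists_le_nsmul_of_support_subset h
  refine ⟨N, ?_⟩
  rw [monomial_pow, one_pow, ← add_tsub_cancel_of_le hN, ← mul_one (1 : R), ← monomial_mul]
  exact K.mul_mem_right _ hb

theorem mem_radical_of_sum_mem_of_mul_mem_radical {α R : Type*} [CommRing R] [DecidableEq α]
    {J : Ideal R} {S : Finset α} {f : α → R} {a : α} (ha : a ∈ S) (hsum : ∑ b ∈ S, f b ∈ J)
    (hmul : ∀ b ∈ S, b ≠ a → f a * f b ∈ J.radical) : f a ∈ J.radical := by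
  have hsq : f a ^ 2 = f a * ∑ b ∈ S, f b - ∑ b ∈ S.erase a, f a * f b := by
    rw [← Finset.add_sum_erase S f ha, mul_add, Finset.mul_sum]
    ring
  refine Ideal.mem_radical_of_pow_mem (m := 2) ?_
  rw [hsq]
  refine J.radical.sub_mem (J.radical.mul_mem_left _ (J.le_radical hsum)) ?_
  exact J.radical.sum_mem fun b hb =>
    hmul b (Finset.mem_of_mem_erase hb) (Finset.ne_of_mem_erase hb)

theorem monomial_one_mem_radical_of_graded_sums_mem {R : Type*} [CommRing R]
    {L : Finset (ι →₀ ℕ)} (hL : ∀ σ ∈ L, ∀ τ ∈ L, σ ⊔ τ ∈ L) (h : (ι →₀ ℕ) → ℕ)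
    (hh : ∀ σ ∈ L, ∀ τ ∈ L, σ < τ → h σ < h τ) {bar : (ι →₀ ℕ) → (ι →₀ ℕ)}
    (hbar : ∀ σ ∈ L, (bar σ).support = σ.support) {J : Ideal (MvPolynomial ι R)}
    (hJ : ∀ σ ∈ L, σ ≠ 0 → ∑ τ ∈ L with h τ = h σ, monomial (bar τ) (1 : R) ∈ J) :
    ∀ σ ∈ L, σ ≠ 0 → monomial (bar σ) (1 : R) ∈ J.radical := by
  classical
  intro σ hσ
  refine (L.finite_toSet.wellFoundedOn (r := (· > ·))).induction
    (P := fun σ => σ ≠ 0 → monomial (bar σ) (1 : R) ∈ J.radical) hσ fun σ hσ ih hσ0 => ?_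
  refine mem_radical_of_sum_mem_of_mul_mem_radical (S := L.filter fun τ => h τ = h σ)
    (f := fun τ => monomial (bar τ) (1 : R)) (Finset.mem_filter.2 ⟨hσ, rfl⟩) (hJ σ hσ hσ0)
    fun τ hτ hτσ => ?_
  rw [Finset.mem_filter] at hτ
  have hlt : σ < σ ⊔ τ := left_lt_sup.2 fun hτle =>
    (hh τ hτ.1 σ hσ (lt_of_le_of_ne hτle hτσ)).ne hτ.2
  have hsup := ih (σ ⊔ τ) (hL σ hσ τ hτ.1) hlt (zero_le.trans_lt hlt).ne'
  rw [monomial_mul, one_mul, ← Ideal.radical_idem]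
  refine monomial_one_mem_radical_of_support_subset hsup (le_of_eq ?_)
  rw [Finsupp.support_add_eq_union, hbar σ hσ, hbar τ hτ.1, hbar _ (hL σ hσ τ hτ.1),
    Finsupp.support_sup]

end Radical

section Height

variable {n : ℕ} {L : Finset (Mon n)} {σ τ : Mon n}

theorem bddAbove_chainLengths (L : Finset (Mon n)) :
    BddAbove {r : ℕ | ∃ c : Fin (r+1) → Mon n, StrictMono c ∧ ∀ i, c i ∈ (L : Set (Mon n))} := by
  refine ⟨L.card, ?_⟩
  rintro r ⟨c, hc, hL⟩
  have := Finset.card_le_card_of_injOn (s := Finset.univ) c (fun i _ => hL i) hc.injective.injOn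
  simp only [Finset.card_univ, Fintype.card_fin] at this
  omega

theorem bddAbove_chainLengths_le (L : Finset (Mon n)) (σ : Mon n) :
    BddAbove {r : ℕ | ∃ c : Fin (r+1) → Mon n, StrictMono c ∧
      (∀ i, c i ∈ (L : Set (Mon n)) ∧ c i ≤ σ) ∧ c (Fin.last r) = σ} :=
  (bddAbove_chainLengths L).mono <| by
    rintro _ ⟨c, hc, hL, -⟩
    exact ⟨c, hc, fun i => (hL i).1⟩

theorem exists_chain_heightIn (hσ : σ ∈ L) :
    ∃ c : Fin (heightIn (L : Set (Mon n)) σ + 1) → Mon n, StrictMono c ∧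
      (∀ i, c i ∈ (L : Set (Mon n)) ∧ c i ≤ σ) ∧
      c (Fin.last (heightIn (L : Set (Mon n)) σ)) = σ := by
  refine Nat.sSup_mem ?_ (bddAbove_chainLengths_le L σ)
  exact ⟨0, fun _ => σ, Subsingleton.strictMono (α := Fin 1) _, fun _ => ⟨hσ, le_rfl⟩, rfl⟩

theorem heightIn_lt_heightIn (hσ : σ ∈ L) (hτ : τ ∈ L) (hστ : σ < τ) :
    heightIn (L : Set (Mon n)) σ < heightIn (L : Set (Mon n)) τ := by
  obtain ⟨c, hc, hcL, hlast⟩ := exists_chain_heightIn hσ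
  refine Nat.lt_of_succ_le (le_csSup (bddAbove_chainLengths_le L τ) ⟨Fin.insertNth (Fin.last _) τ c,
    Fin.strictMono_insertNth_last hc τ (hlast.symm ▸ hστ), ?_, ?_⟩)
  · refine Fin.lastCases ?_ fun i => ?_
    · simpa [Fin.insertNth_last'] using hτ
    · simpa [Fin.insertNth_last'] using ⟨(hcL i).1, (hcL i).2.trans hστ.le⟩
  · simp

theorem heightIn_le_latHeight (hσ : σ ∈ L) :
    heightIn (L : Set (Mon n)) σ ≤ latHeight (L : Set (Mon n)) :=
  csSup_le_csSup (bddAbove_chainLengths L)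
    ⟨0, fun _ => σ, Subsingleton.strictMono (α := Fin 1) _, fun _ => ⟨hσ, le_rfl⟩, rfl⟩
    (by rintro _ ⟨c, hc, hL, -⟩; exact ⟨c, hc, fun i => (hL i).1⟩)

theorem heightIn_zero (L : Set (Mon n)) : heightIn L 0 = 0 := by
  refine Nat.le_zero.1 (csSup_le' fun r ⟨c, hc, hL, hlast⟩ => Nat.le_zero.2 ?_)
  obtain _ | r := r
  · rfl
  · have h0 : c 0 < c (Fin.last (r + 1)) := hc Fin.last_pos'
    rw [hlast] at h0
    exact (not_lt_zero h0).elim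

theorem one_le_heightIn (h0 : 0 ∈ L) (hσ : σ ∈ L) (hσ0 : σ ≠ 0) :
    1 ≤ heightIn (L : Set (Mon n)) σ := by
  have := heightIn_lt_heightIn h0 hσ (pos_iff_ne_zero.2 hσ0)
  omega

end Height

section LcmLattice

variable {n : ℕ} {G : Finset (Mon n)} {σ τ : Mon n}

theorem zero_mem_lcmLattice (G : Finset (Mon n)) : 0 ∈ lcmLattice G :=
  Finset.mem_image.2 ⟨∅, Finset.empty_mem_powerset G, Finset.sup_empty⟩

theorem mem_lcmLattice_of_mem (hσ : σ ∈ G) : σ ∈ lcmLattice G :=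
  Finset.mem_image.2 ⟨{σ}, Finset.mem_powerset.2 (Finset.singleton_subset_iff.2 hσ),
    Finset.sup_singleton⟩

theorem sup_mem_lcmLattice (hσ : σ ∈ lcmLattice G) (hτ : τ ∈ lcmLattice G) :
    σ ⊔ τ ∈ lcmLattice G := by
  classical
  obtain ⟨F, hF, rfl⟩ := Finset.mem_image.1 hσ
  obtain ⟨F', hF', rfl⟩ := Finset.mem_image.1 hτ
  exact Finset.mem_image.2 ⟨F ∪ F', Finset.mem_powerset.2 (Finset.union_subset
    (Finset.mem_powerset.1 hF) (Finset.mem_powerset.1 hF')), Finset.sup_union⟩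

theorem exists_le_of_mem_lcmLattice (hσ : σ ∈ lcmLattice G) (hσ0 : σ ≠ 0) :
    ∃ f ∈ G, f ≤ σ := by
  obtain ⟨F, hF, rfl⟩ := Finset.mem_image.1 hσ
  obtain ⟨f, hf⟩ : F.Nonempty :=
    Finset.nonempty_iff_ne_empty.2 (by rintro rfl; exact hσ0 Finset.sup_empty)
  exact ⟨f, Finset.mem_powerset.1 hF hf, Finset.le_sup (f := id) hf⟩

theorem monomial_one_mem_radical_monIdeal (k : Type) [Field k] (hσ : σ ∈ lcmLattice G)
    (hσ0 : σ ≠ 0) {b : Mon n} (hb : b.support = σ.support) :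
    monomial b (1 : k) ∈ (monIdeal k G).radical := by
  obtain ⟨f, hf, hfσ⟩ := exists_le_of_mem_lcmLattice hσ hσ0
  refine monomial_one_mem_radical_of_support_subset (Ideal.subset_span ⟨f, hf, rfl⟩) ?_
  exact hb ▸ Finsupp.support_mono hfσ

end LcmLattice

theorem stmt0_general {n : ℕ} (k : Type) [Field k]
    (G : Finset (Mon n)) (hG0 : ∀ g ∈ G, g ≠ 0)
    (I : Ideal (MvPolynomial (Fin (n+1)) k)) (hI : I = monIdeal k G)
    (L : Finset (Mon n)) (hL : L = lcmLattice G)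
    (d : ℕ → ℕ)
    (bar : Mon n → Mon n)
    (hbar : ∀ σ ∈ L, mdeg (bar σ) = d (heightIn (L : Set (Mon n)) σ) ∧
      (bar σ).support = σ.support)
    (g : ℕ → MvPolynomial (Fin (n+1)) k)
    (hg : ∀ r, g r = ∑ σ ∈ L.filter (fun σ => heightIn (L : Set (Mon n)) σ = r),
      monomial (bar σ) (1:k)) :
    (Ideal.span (g '' (Set.Icc 1 (latHeight (L : Set (Mon n)))))).radical = I.radical := by
  subst hI hL
  set J := Ideal.span (g '' Set.Icc 1 (latHeight (lcmLattice G : Set (Mon n))))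
  have hsupp : ∀ σ ∈ lcmLattice G, (bar σ).support = σ.support := fun σ hσ => (hbar σ hσ).2
  apply le_antisymm
  · rw [Ideal.radical_le_radical_iff, Ideal.span_le]
    rintro _ ⟨r, ⟨hr, -⟩, rfl⟩
    rw [SetLike.mem_coe, hg r]
    refine Ideal.sum_mem _ fun σ hσ => ?_
    obtain ⟨hσL, rfl⟩ := Finset.mem_filter.1 hσ
    refine monomial_one_mem_radical_monIdeal k hσL ?_ (hsupp σ hσL)
    rintro rfl
    rw [heightIn_zero] at hr
    omega
  · have hgJ : ∀ σ ∈ lcmLattice G, σ ≠ 0 → g (heightIn (lcmLattice G : Set (Mon n)) σ) ∈ J :=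
      fun σ hσ hσ0 => Ideal.subset_span <| Set.mem_image_of_mem g <|
        Set.mem_Icc.2 ⟨one_le_heightIn (zero_mem_lcmLattice G) hσ hσ0, heightIn_le_latHeight hσ⟩
    have hbarJ := monomial_one_mem_radical_of_graded_sums_mem
      (fun _ hσ _ hτ => sup_mem_lcmLattice hσ hτ) _
      (fun _ hσ _ hτ => heightIn_lt_heightIn hσ hτ) hsupp fun σ hσ hσ0 => hg _ ▸ hgJ σ hσ hσ0
    rw [Ideal.radical_le_radical_iff, monIdeal, Ideal.span_le]
    rintro _ ⟨f, hf, rfl⟩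
    have hfL := mem_lcmLattice_of_mem hf
    rw [SetLike.mem_coe, ← Ideal.radical_idem]
    exact monomial_one_mem_radical_of_support_subset (hbarJ f hfL (hG0 f hf)) (hsupp f hfL).subset

/-- Let `I` be a monomial ideal of `k[x_0, …, x_n]` with minimal monomial
generating set `G` and lcm-lattice `L`.  For each `r = 1, …, height L` fix `d r` at least the
maximal degree of a height-`r` lattice element, and for each `σ ∈ L` a monomial `bar σ` of
degree `d (height σ)` with the same support (radical) as `σ`.  Set
`g r = ∑_{σ ∈ L, height σ = r} bar σ`.  Then `√(g 1, …, g (height L)) = √I`. -/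
theorem stmt0 {n : ℕ} (k : Type) [Field k]
    (G : Finset (Mon n)) (hG0 : ∀ g ∈ G, g ≠ 0)
    (hGmin : ∀ g ∈ G, ∀ g' ∈ G, g ≤ g' → g = g')
    (I : Ideal (MvPolynomial (Fin (n+1)) k)) (hI : I = monIdeal k G)
    (L : Finset (Mon n)) (hL : L = lcmLattice G)
    (d : ℕ → ℕ)
    (hd : ∀ r, 1 ≤ r → r ≤ latHeight (L : Set (Mon n)) →
      ∀ σ ∈ L, heightIn (L : Set (Mon n)) σ = r → mdeg σ ≤ d r)
    (bar : Mon n → Mon n)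
    (hbar : ∀ σ ∈ L, mdeg (bar σ) = d (heightIn (L : Set (Mon n)) σ) ∧
      (bar σ).support = σ.support)
    (g : ℕ → MvPolynomial (Fin (n+1)) k)
    (hg : ∀ r, g r = ∑ σ ∈ L.filter (fun σ => heightIn (L : Set (Mon n)) σ = r),
      monomial (bar σ) (1:k)) :
    (Ideal.span (g '' (Set.Icc 1 (latHeight (L : Set (Mon n)))))).radical = I.radical :=
  stmt0_general k G hG0 I hI L hL d bar hbar g hg
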